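/- For all m, n ≥ 2, the Randić energy of the graph K_{m,n} − e, obtained from the complete bipartite graph K_{m,n} by deleting one edge, is RE(K_{m,n} − e) = 2 + 2/√(mn). -/

import Mathlib

open scoped Classical

/-- The energy of a real matrix: the sum of the absolute values of its eigenvalues
(with multiplicity), when the matrix is Hermitian (= symmetric). -/
noncomputable def matrixEnergy {n : Type*} [Fintype n] (A : Matrix n n ℝ) : ℝ :=
  if h : A.IsHermitian then ∑ i, |h.eigenvalues i| else 0

/-- The energy of a finite simple graph: the sum of the absolute values of the
eigenvalues of its adjacency matrix. -/
noncomputable def SimpleGraph.energy {V : Type*} [Fintype V] (G : SimpleGraph V) : ℝ :=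
  matrixEnergy (G.adjMatrix ℝ)

/-- The Randić matrix of a finite simple graph: `(i,j)`-entry `1/√(dᵢ dⱼ)` if `i ~ j`, else `0`. -/
noncomputable def SimpleGraph.randicMatrix {V : Type*} [Fintype V] (G : SimpleGraph V) :
    Matrix V V ℝ :=
  Matrix.of fun i j =>
    if G.Adj i j then 1 / Real.sqrt ((G.degree i : ℝ) * (G.degree j : ℝ)) else 0

/-- The Randić energy of a finite simple graph: the sum of the absolute values of the
eigenvalues of its Randić matrix. -/
noncomputable def SimpleGraph.randicEnergy {V : Type*} [Fintype V] (G : SimpleGraph V) : ℝ :=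
  matrixEnergy G.randicMatrix

/-- The Randić characteristic polynomial `det (λ I - R(G))`. -/
noncomputable def SimpleGraph.randicCharpoly {V : Type*} [Fintype V] (G : SimpleGraph V) :
    Polynomial ℝ :=
  G.randicMatrix.charpoly

/-!
Write `w v = 1 / √(deg v)`. In `K_{m,n} − ab` the Randić matrix is `x yᵀ + y xᵀ − u vᵀ − v uᵀ`,
where `x` and `y` are `w` restricted to the two sides and `u`, `v` are `w` restricted to `a` and
`b`; that is, `R = Hᵀ J H` for a `4 × V` matrix `H` and a fixed `4 × 4` matrix `J`. Then
`R ^ (k + 1) = Hᵀ (J H Hᵀ) ^ k J H`, so the spectral data of `R` is governed by the `4 × 4`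
matrix `M = J H Hᵀ`, for which a direct computation gives `M⁴ − (1 + s²) M² + s² = 0`,
`tr M² = 2 + 2 s²` and `tr M⁴ = 2 + 2 s⁴` with `s = 1 / √(m n)`. Hence every eigenvalue `μ` of `R`
lies in `{0, ±1, ±s}`, where `s (s + 1) |μ| = (s² + s + 1) μ² − μ⁴`; summing over the eigenvalues,
`s (s + 1) RE = (s² + s + 1) tr R² − tr R⁴ = 2 s (s + 1)²`.
-/

open Matrix Polynomial

namespace Matrix.IsHermitian

variable {𝕜 : Type*} [RCLike 𝕜] {n : Type*} [Fintype n] [DecidableEq n] {A : Matrix n n 𝕜}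

theorem trace_pow_eq_sum_eigenvalues_pow (hA : A.IsHermitian) (k : ℕ) :
    (A ^ k).trace = ∑ i, (hA.eigenvalues i : 𝕜) ^ k := by
  conv_lhs => rw [hA.spectral_theorem]
  rw [← map_pow, Unitary.conjStarAlgAut_apply, trace_mul_cycle, Unitary.coe_star_mul_self,
    Matrix.one_mul, diagonal_pow, trace_diagonal]
  rfl

theorem eval_eigenvalues_eq_zero (hA : A.IsHermitian) {p : ℝ[X]} (hp : aeval A p = 0) (i : n) :
    p.eval (hA.eigenvalues i) = 0 := by
  have : Nonempty n := ⟨i⟩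
  have h := spectrum.subset_polynomial_aeval A p ⟨_, hA.eigenvalues_mem_spectrum_real i, rfl⟩
  rwa [hp, spectrum.zero_eq, Set.mem_singleton_iff] at h

end Matrix.IsHermitian

theorem mul_add_one_mul_abs_eq_of_eq_zero {s μ : ℝ} (hs : 0 ≤ s)
    (h : μ * (μ ^ 4 - (1 + s ^ 2) * μ ^ 2 + s ^ 2) = 0) :
    s * (s + 1) * |μ| = (s * (s + 1) + 1) * μ ^ 2 - μ ^ 4 := by
  have habs : |μ| = 0 ∨ |μ| = 1 ∨ |μ| = s := by
    rcases mul_eq_zero.1 (show μ * (μ ^ 2 - 1) * (μ ^ 2 - s ^ 2) = 0 by linear_combination h)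
      with h | h
    · rcases mul_eq_zero.1 h with h | h
      · exact .inl (abs_eq_zero.2 h)
      · exact .inr (.inl (by simpa using sq_eq_sq_iff_abs_eq_abs μ 1 |>.1 (by linarith)))
    · exact .inr (.inr (by simpa [abs_of_nonneg hs] using
        sq_eq_sq_iff_abs_eq_abs μ s |>.1 (by linarith)))
  rw [show μ ^ 4 = (μ ^ 2) ^ 2 by ring, ← sq_abs μ]
  rcases habs with h | h | h <;> rw [h] <;> ring

theorem matrixEnergy_eq_of_aeval_eq_zero {n : Type*} [Fintype n] [DecidableEq n]
    {A : Matrix n n ℝ} (hA : A.IsHermitian) {s : ℝ} (hs : 0 < s)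
    (h : aeval A (X * (X ^ 4 - C (1 + s ^ 2) * X ^ 2 + C (s ^ 2))) = 0)
    (h₂ : (A ^ 2).trace = 2 + 2 * s ^ 2) (h₄ : (A ^ 4).trace = 2 + 2 * (s ^ 2) ^ 2) :
    matrixEnergy A = 2 + 2 * s := by
  have hμ (i : n) := mul_add_one_mul_abs_eq_of_eq_zero hs.le
    (by simpa using hA.eval_eigenvalues_eq_zero h i)
  have hsum : s * (s + 1) * matrixEnergy A = (s * (s + 1) + 1) * (A ^ 2).trace - (A ^ 4).trace := by
    simp only [matrixEnergy, dif_pos hA, hA.trace_pow_eq_sum_eigenvalues_pow, Finset.mul_sum,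
      ← Finset.sum_sub_distrib, RCLike.ofReal_real_eq_id, id]
    exact Finset.sum_congr rfl fun i _ => hμ i
  rw [h₂, h₄] at hsum
  refine mul_left_cancel₀ (by positivity : s * (s + 1) ≠ 0) ?_
  linear_combination hsum

namespace Matrix

variable {R ι V : Type*} [CommRing R] [Fintype ι] [Fintype V] [DecidableEq ι] [DecidableEq V]

theorem mul_mul_pow_succ (K : Matrix V ι R) (J : Matrix ι ι R) (H : Matrix ι V R) (k : ℕ) :
    (K * J * H) ^ (k + 1) = K * (J * (H * K)) ^ k * J * H := by
  induction k with
  | zero => simp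
  | succ k ih =>
    rw [pow_succ, ih, pow_succ]
    simp only [Matrix.mul_assoc]

theorem trace_mul_mul_pow_succ (K : Matrix V ι R) (J : Matrix ι ι R) (H : Matrix ι V R)
    (k : ℕ) : ((K * J * H) ^ (k + 1)).trace = ((J * (H * K)) ^ (k + 1)).trace := by
  rw [mul_mul_pow_succ, Matrix.mul_assoc, Matrix.mul_assoc, trace_mul_comm, pow_succ]
  simp only [Matrix.mul_assoc]

theorem aeval_mul_mul_X_mul (K : Matrix V ι R) (J : Matrix ι ι R) (H : Matrix ι V R)
    (p : R[X]) : aeval (K * J * H) (X * p) = K * aeval (J * (H * K)) p * J * H := by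
  induction p using Polynomial.induction_on' with
  | add p q hp hq =>
    rw [mul_add, map_add, hp, hq, map_add, Matrix.mul_add, Matrix.add_mul, Matrix.add_mul]
  | monomial k a =>
    rw [X_mul_monomial, aeval_monomial, aeval_monomial, mul_mul_pow_succ]
    simp only [Algebra.algebraMap_eq_smul_one, smul_mul_assoc, one_mul, Matrix.mul_smul,
      Matrix.smul_mul]

end Matrix

namespace SimpleGraph

section Randic

variable {V : Type*} [Fintype V] (G : SimpleGraph V)

noncomputable def randicWeight (v : V) : ℝ := (√(G.degree v : ℝ))⁻¹

theorem randicMatrix_apply (v w : V) : G.randicMatrix v w =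
    if G.Adj v w then G.randicWeight v * G.randicWeight w else 0 := by
  simp only [randicMatrix, randicWeight, of_apply, one_div, Real.sqrt_mul (Nat.cast_nonneg _),
    mul_inv]

theorem randicWeight_sq (v : V) : G.randicWeight v ^ 2 = (G.degree v : ℝ)⁻¹ := by
  rw [randicWeight, inv_pow, Real.sq_sqrt (Nat.cast_nonneg _)]

theorem isHermitian_randicMatrix : G.randicMatrix.IsHermitian := by
  ext v w
  simp only [conjTranspose_apply, star_trivial, randicMatrix_apply, G.adj_comm, mul_comm]

end Randic

variable {α β : Type*} [Fintype α] [Fintype β] [DecidableEq α] [DecidableEq β]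

abbrev completeBipartiteMinusEdge (a : α) (b : β) : SimpleGraph (α ⊕ β) :=
  (completeBipartiteGraph α β).deleteEdges {s(Sum.inl a, Sum.inr b)}

namespace completeBipartiteMinusEdge

def randicCore : Matrix (Fin 4) (Fin 4) ℝ :=
  !![0, 0, 1, 0; 0, 0, 0, -1; 1, 0, 0, 0; 0, -1, 0, 0]

/-- `randicFactor a b * (randicFactor a b)ᵀ` has this shape with `p = w (inl a) ^ 2` and
`r = ∑ i ≠ a, w (inl i) ^ 2`, and `q`, `t` the same on the other side. -/
def randicGram (p r q t : ℝ) : Matrix (Fin 4) (Fin 4) ℝ :=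
  !![p + r, p, 0, 0; p, p, 0, 0; 0, 0, q + t, q; 0, 0, q, q]

theorem randicCore_mul_randicGram_sq (p r q t : ℝ) :
    (randicCore * randicGram p r q t) ^ 2 =
      !![(p + r) * (q + t) - p * q, p * t, 0, 0; -q * r, 0, 0, 0;
        0, 0, (p + r) * (q + t) - p * q, q * r; 0, 0, -p * t, 0] := by
  rw [sq]
  ext i j
  fin_cases i <;> fin_cases j <;>
    simp [randicCore, randicGram, Matrix.mul_apply, Fin.sum_univ_four] <;> ring

/-- Cayley–Hamilton in disguise: `M ^ 2` is block diagonal with two `2 × 2` blocks, each of trace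
`p * t + q * r + r * t` and determinant `p * q * r * t`. -/
theorem aeval_randicCore_mul_randicGram (p r q t : ℝ) :
    aeval (randicCore * randicGram p r q t)
      (X ^ 4 - C (p * t + q * r + r * t) * X ^ 2 + C (p * q * r * t)) = 0 := by
  simp only [map_add, map_sub, map_mul, aeval_X_pow, aeval_C, Algebra.algebraMap_eq_smul_one,
    smul_mul_assoc, one_mul]
  rw [(pow_mul _ 2 2 : _ ^ 4 = _), randicCore_mul_randicGram_sq]
  ext i j
  fin_cases i <;> fin_cases j <;> simp [Matrix.mul_apply, Fin.sum_univ_four, sq] <;> ring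

theorem trace_randicCore_mul_randicGram_sq (p r q t : ℝ) :
    ((randicCore * randicGram p r q t) ^ 2).trace = 2 * (p * t + q * r + r * t) := by
  rw [randicCore_mul_randicGram_sq, trace, Fin.sum_univ_four]
  simp only [diag_apply, of_apply, cons_val', cons_val_fin_one, cons_val_zero, cons_val_one,
    cons_val]
  ring

theorem trace_randicCore_mul_randicGram_pow_four (p r q t : ℝ) :
    ((randicCore * randicGram p r q t) ^ 4).trace =
      2 * (p * t + q * r + r * t) ^ 2 - 4 * (p * q * r * t) := by
  rw [(pow_mul _ 2 2 : _ ^ 4 = _), randicCore_mul_randicGram_sq, sq, trace, Fin.sum_univ_four]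
  simp only [diag_apply, mul_apply, Fin.sum_univ_four, of_apply, cons_val', cons_val_fin_one,
    cons_val_zero, cons_val_one, cons_val]
  ring

variable (a : α) (b : β)

theorem degree_inl (i : α) [Fintype ((completeBipartiteMinusEdge a b).neighborSet (Sum.inl i))] :
    ((completeBipartiteMinusEdge a b).degree (Sum.inl i) : ℝ) =
      Fintype.card β - if i = a then 1 else 0 := by
  convert degree_eq_sum_if_adj (R := ℝ) (completeBipartiteMinusEdge a b) (Sum.inl i) using 3
  · rfl
  rw [Fintype.sum_sum_type]
  by_cases hi : i = a <;>
    simp [hi, Finset.sum_ite, Finset.filter_ne', Nat.cast_pred (Fintype.card_pos_iff.2 ⟨b⟩)]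

theorem degree_inr (j : β) [Fintype ((completeBipartiteMinusEdge a b).neighborSet (Sum.inr j))] :
    ((completeBipartiteMinusEdge a b).degree (Sum.inr j) : ℝ) =
      Fintype.card α - if j = b then 1 else 0 := by
  convert degree_eq_sum_if_adj (R := ℝ) (completeBipartiteMinusEdge a b) (Sum.inr j) using 3
  · rfl
  rw [Fintype.sum_sum_type]
  by_cases hj : j = b <;>
    simp [hj, Finset.sum_ite, Finset.filter_ne', Nat.cast_pred (Fintype.card_pos_iff.2 ⟨a⟩)]

theorem randicWeight_inl_sq (i : α) :
    (completeBipartiteMinusEdge a b).randicWeight (Sum.inl i) ^ 2 =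
      if i = a then ((Fintype.card β : ℝ) - 1)⁻¹ else (Fintype.card β : ℝ)⁻¹ := by
  rw [randicWeight_sq, degree_inl]
  split_ifs <;> simp

theorem randicWeight_inr_sq (j : β) :
    (completeBipartiteMinusEdge a b).randicWeight (Sum.inr j) ^ 2 =
      if j = b then ((Fintype.card α : ℝ) - 1)⁻¹ else (Fintype.card α : ℝ)⁻¹ := by
  rw [randicWeight_sq, degree_inr]
  split_ifs <;> simp

noncomputable def randicFactor : Matrix (Fin 4) (α ⊕ β) ℝ :=
  let w := (completeBipartiteMinusEdge a b).randicWeight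
  Matrix.of ![Sum.elim (w ∘ Sum.inl) 0, Pi.single (Sum.inl a) (w (Sum.inl a)),
    Sum.elim 0 (w ∘ Sum.inr), Pi.single (Sum.inr b) (w (Sum.inr b))]

theorem randicMatrix_eq :
    (completeBipartiteMinusEdge a b).randicMatrix =
      (randicFactor a b)ᵀ * randicCore * randicFactor a b := by
  ext (i | j) (i' | j')
  · simp [randicMatrix_apply, randicFactor, randicCore, Matrix.mul_apply, Fin.sum_univ_four]
  · by_cases hi : i = a <;> by_cases hj : j' = b <;>
      simp [randicMatrix_apply, randicFactor, randicCore, Matrix.mul_apply, Fin.sum_univ_four,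
        hi, hj]
  · by_cases hi : i' = a <;> by_cases hj : j = b <;>
      simp [randicMatrix_apply, randicFactor, randicCore, Matrix.mul_apply, Fin.sum_univ_four,
        hi, hj, mul_comm]
  · simp [randicMatrix_apply, randicFactor, randicCore, Matrix.mul_apply, Fin.sum_univ_four]

theorem randicFactor_mul_transpose :
    randicFactor a b * (randicFactor a b)ᵀ =
      randicGram ((Fintype.card β : ℝ) - 1)⁻¹ ((Fintype.card α - 1) / Fintype.card β)
        ((Fintype.card α : ℝ) - 1)⁻¹ ((Fintype.card β - 1) / Fintype.card α) := by
  ext k l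
  fin_cases k <;> fin_cases l <;>
    simp [randicFactor, randicGram, Matrix.mul_apply, Fintype.sum_sum_type, Pi.single_apply,
      ← sq, randicWeight_inl_sq, randicWeight_inr_sq, Finset.sum_ite, Finset.filter_ne',
      Finset.filter_eq', Nat.cast_pred (Fintype.card_pos_iff.2 ⟨a⟩),
      Nat.cast_pred (Fintype.card_pos_iff.2 ⟨b⟩), div_eq_mul_inv]

theorem randicGram_coeff_sum {x y : ℕ} (hx : 1 < x) (hy : 1 < y) :
    ((y : ℝ) - 1)⁻¹ * ((y - 1) / x) + ((x : ℝ) - 1)⁻¹ * ((x - 1) / y) +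
      (x - 1) / y * ((y - 1) / x) = 1 + ((x : ℝ) * y)⁻¹ := by
  have hx' : (x : ℝ) - 1 ≠ 0 := sub_ne_zero.2 (by exact_mod_cast hx.ne')
  have hy' : (y : ℝ) - 1 ≠ 0 := sub_ne_zero.2 (by exact_mod_cast hy.ne')
  have : (x : ℝ) ≠ 0 := by positivity
  have : (y : ℝ) ≠ 0 := by positivity
  field_simp
  ring

theorem randicGram_coeff_prod {x y : ℕ} (hx : 1 < x) (hy : 1 < y) :
    ((y : ℝ) - 1)⁻¹ * ((x : ℝ) - 1)⁻¹ * ((x - 1) / y) * ((y - 1) / x) = ((x : ℝ) * y)⁻¹ := by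
  have hx' : (x : ℝ) - 1 ≠ 0 := sub_ne_zero.2 (by exact_mod_cast hx.ne')
  have hy' : (y : ℝ) - 1 ≠ 0 := sub_ne_zero.2 (by exact_mod_cast hy.ne')
  field_simp

theorem aeval_randicMatrix (hα : 1 < Fintype.card α) (hβ : 1 < Fintype.card β) :
    aeval (completeBipartiteMinusEdge a b).randicMatrix (X * (X ^ 4 -
      C (1 + ((Fintype.card α : ℝ) * Fintype.card β)⁻¹) * X ^ 2 +
        C ((Fintype.card α : ℝ) * Fintype.card β)⁻¹)) = 0 := by
  rw [randicMatrix_eq, aeval_mul_mul_X_mul, randicFactor_mul_transpose,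
    ← randicGram_coeff_sum hα hβ, ← randicGram_coeff_prod hα hβ, aeval_randicCore_mul_randicGram,
    Matrix.mul_zero, Matrix.zero_mul, Matrix.zero_mul]

theorem trace_randicMatrix_sq (hα : 1 < Fintype.card α) (hβ : 1 < Fintype.card β) :
    ((completeBipartiteMinusEdge a b).randicMatrix ^ 2).trace =
      2 + 2 * ((Fintype.card α : ℝ) * Fintype.card β)⁻¹ := by
  rw [randicMatrix_eq, trace_mul_mul_pow_succ _ _ _ 1, randicFactor_mul_transpose,
    trace_randicCore_mul_randicGram_sq, randicGram_coeff_sum hα hβ]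
  ring

theorem trace_randicMatrix_pow_four (hα : 1 < Fintype.card α) (hβ : 1 < Fintype.card β) :
    ((completeBipartiteMinusEdge a b).randicMatrix ^ 4).trace =
      2 + 2 * ((Fintype.card α : ℝ) * Fintype.card β)⁻¹ ^ 2 := by
  rw [randicMatrix_eq, trace_mul_mul_pow_succ _ _ _ 3, randicFactor_mul_transpose,
    trace_randicCore_mul_randicGram_pow_four, randicGram_coeff_sum hα hβ,
    randicGram_coeff_prod hα hβ]
  ring

theorem randicEnergy_eq (hα : 1 < Fintype.card α) (hβ : 1 < Fintype.card β) :
    (completeBipartiteMinusEdge a b).randicEnergy =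
      2 + 2 / √((Fintype.card α : ℝ) * Fintype.card β) := by
  have hs_sq : (√((Fintype.card α : ℝ) * Fintype.card β))⁻¹ ^ 2 =
      ((Fintype.card α : ℝ) * Fintype.card β)⁻¹ := by
    rw [inv_pow, Real.sq_sqrt (by positivity)]
  rw [div_eq_mul_inv]
  refine matrixEnergy_eq_of_aeval_eq_zero (isHermitian_randicMatrix _)
    (by have := Fintype.card_pos_iff.2 ⟨a⟩; have := Fintype.card_pos_iff.2 ⟨b⟩; positivity)
    ?_ ?_ ?_ <;> rw [hs_sq]
  · exact aeval_randicMatrix a b hα hβ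
  · exact trace_randicMatrix_sq a b hα hβ
  · exact trace_randicMatrix_pow_four a b hα hβ

end completeBipartiteMinusEdge

end SimpleGraph

theorem randicEnergy_completeBipartite_deleteEdge (m n : ℕ) (hm : 2 ≤ m) (hn : 2 ≤ n)
    (a : Fin m) (b : Fin n) :
    ((completeBipartiteGraph (Fin m) (Fin n)).deleteEdges
        {s(Sum.inl a, Sum.inr b)}).randicEnergy =
      2 + 2 / Real.sqrt ((m : ℝ) * (n : ℝ)) := by
  simpa using SimpleGraph.completeBipartiteMinusEdge.randicEnergy_eq a b
    (by rw [Fintype.card_fin]; exact hm) (by rw [Fintype.card_fin]; exact hn)
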